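/- arXiv:2510.01509 — 3 statements merged into one kernel-verified Lean document; each statement's English description precedes it below -/
import Mathlib

section
/- Let ℓ ≥ 2, n ≥ 1, k ≥ 1, and let M be an integer such that every (ℓ−1)-semi-intersecting family with parameters n and k has size at most M. Then every ℓ-semi-intersecting family 𝒮 with parameters n and k satisfies k·|𝒮| ≤ n·M. -/
/-- An `ℓ`-semi-intersecting family with parameters `n` and `k`: pairwise disjoint base
sets `A 0, …, A (ℓ-1)`, each of size `n`, and a family `𝒮` of subsets of their union such
that `|S ∩ A i| = k` for every `S ∈ 𝒮` and every `i`, and for distinct `S, T ∈ 𝒮` the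
number of indices `i` with `S ∩ T ∩ A i = ∅` is odd. -/
def IsSemiIntersecting {α : Type*} [DecidableEq α] (ℓ n k : ℕ)
    (A : Fin ℓ → Finset α) (𝒮 : Finset (Finset α)) : Prop :=
  (∀ i j, i ≠ j → Disjoint (A i) (A j)) ∧
  (∀ i, (A i).card = n) ∧
  (∀ S ∈ 𝒮, S ⊆ Finset.univ.biUnion A) ∧
  (∀ S ∈ 𝒮, ∀ i, (S ∩ A i).card = k) ∧
  (∀ S ∈ 𝒮, ∀ T ∈ 𝒮, S ≠ T →
    Odd ((Finset.univ.filter (fun i => S ∩ T ∩ A i = ∅)).card))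

/-!
Fix the part `A 0`. Since every `S ∈ 𝒮` meets it in `k` points, `k · |𝒮|` counts the pairs
`(v, S)` with `v ∈ S ∩ A 0`, so it suffices that at most `M` sets of `𝒮` pass through each
`v ∈ A 0`. Deleting `A 0` from the sets through `v` leaves an `(ℓ - 1)`-semi-intersecting family
on the other parts: for `i ≠ 0` the sets `S ∩ T ∩ A i` do not change, and `i = 0` never counted
because `v ∈ S ∩ T ∩ A 0`. The deletion is injective: if `S ≠ T` agree off `A 0`, the odd count
gives some `i ≠ 0` with `S ∩ T ∩ A i = ∅`, while `S ∩ T ∩ A i = S ∩ A i` has `k ≥ 1` elements.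
-/

open Finset

namespace Finset

variable {α : Type*} [DecidableEq α] {B C : Finset α}

lemma sdiff_inter_of_disjoint (h : Disjoint B C) (S : Finset α) : S \ B ∩ C = S ∩ C := by
  rw [sdiff_inter_right_comm, sdiff_eq_self_of_disjoint (h.symm.mono_left inter_subset_right)]

lemma sdiff_inter_sdiff_inter_of_disjoint (h : Disjoint B C) (S T : Finset α) :
    S \ B ∩ (T \ B) ∩ C = S ∩ T ∩ C := by
  ext x
  have : x ∈ B → x ∉ C := fun hB => disjoint_left.mp h hB
  simp only [mem_inter, mem_sdiff]
  tauto

end Finset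

namespace IsSemiIntersecting

variable {α : Type*} [DecidableEq α] {m n k : ℕ} {A : Fin (m + 1) → Finset α}
  {𝒮 : Finset (Finset α)} {v : α}

def link (A : Fin (m + 1) → Finset α) (𝒮 : Finset (Finset α)) (v : α) : Finset (Finset α) :=
  {S ∈ 𝒮 | v ∈ S}.image (· \ A 0)

lemma disjoint_zero_succ (h : IsSemiIntersecting (m + 1) n k A 𝒮) (i : Fin m) :
    Disjoint (A 0) (A i.succ) :=
  h.1 _ _ (Fin.succ_ne_zero i).symm

lemma card_filter_inter_eq_empty_eq (h : IsSemiIntersecting (m + 1) n k A 𝒮) (hv : v ∈ A 0)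
    {S T : Finset α} (hvS : v ∈ S) (hvT : v ∈ T) :
    #{i : Fin m | S \ A 0 ∩ (T \ A 0) ∩ A i.succ = ∅} = #{i | S ∩ T ∩ A i = ∅} := by
  have hzero : S ∩ T ∩ A 0 ≠ ∅ := nonempty_iff_ne_empty.mp ⟨v, by simp [hvS, hvT, hv]⟩
  simp only [Fin.card_filter_univ_succ, hzero, if_false,
    sdiff_inter_sdiff_inter_of_disjoint (h.disjoint_zero_succ _)]

lemma link_isSemiIntersecting (h : IsSemiIntersecting (m + 1) n k A 𝒮) (hv : v ∈ A 0) :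
    IsSemiIntersecting m n k (fun i => A i.succ) (link A 𝒮 v) := by
  have ⟨hdisj, hcard, hsub, hint, hodd⟩ := h
  refine ⟨fun i j hij => hdisj _ _ (Fin.succ_injective _ |>.ne hij), fun i => hcard _,
    ?_, ?_, ?_⟩
  · simp only [link, mem_image, mem_filter]
    rintro _ ⟨S, ⟨hS, -⟩, rfl⟩ x hx
    obtain ⟨hxS, hx0⟩ := mem_sdiff.mp hx
    obtain ⟨i, -, hxi⟩ := mem_biUnion.mp (hsub S hS hxS)
    cases i using Fin.cases with
    | zero => exact absurd hxi hx0
    | succ i => exact mem_biUnion.mpr ⟨i, mem_univ _, hxi⟩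
  · simp only [link, mem_image, mem_filter]
    rintro _ ⟨S, ⟨hS, -⟩, rfl⟩ i
    rw [sdiff_inter_of_disjoint (h.disjoint_zero_succ i)]
    exact hint S hS _
  · simp only [link, mem_image, mem_filter]
    rintro _ ⟨S, ⟨hS, hvS⟩, rfl⟩ _ ⟨T, ⟨hT, hvT⟩, rfl⟩ hne
    rw [h.card_filter_inter_eq_empty_eq hv hvS hvT]
    exact hodd S hS T hT (by rintro rfl; exact hne rfl)

lemma card_link (h : IsSemiIntersecting (m + 1) n k A 𝒮) (hk : 1 ≤ k) (hv : v ∈ A 0) :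
    #(link A 𝒮 v) = #{S ∈ 𝒮 | v ∈ S} := by
  refine card_image_of_injOn fun S hS T hT hST => ?_
  have ⟨_, _, _, hint, hodd⟩ := h
  obtain ⟨hS, hvS⟩ := mem_filter.mp (mem_coe.mp hS)
  obtain ⟨hT, hvT⟩ := mem_filter.mp (mem_coe.mp hT)
  by_contra hne
  obtain ⟨i, hi⟩ : ({i | S ∩ T ∩ A i = ∅} : Finset (Fin (m + 1))).Nonempty :=
    card_pos.mp (hodd S hS T hT hne).pos
  rw [mem_filter_univ] at hi
  cases i using Fin.cases with
  | zero => exact nonempty_iff_ne_empty.mp ⟨v, by simp [hvS, hvT, hv]⟩ hi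
  | succ i =>
    have hd := h.disjoint_zero_succ i
    have hSTi : S ∩ T ∩ A i.succ = T ∩ A i.succ := by
      rw [← sdiff_inter_sdiff_inter_of_disjoint hd, hST, inter_self, sdiff_inter_of_disjoint hd]
    have := hint T hT i.succ
    rw [← hSTi, hi, card_empty] at this
    omega

end IsSemiIntersecting

theorem stmt_15_general {α : Type*} [DecidableEq α] (ℓ n k M : ℕ)
    (hℓ : 2 ≤ ℓ) (hk : 1 ≤ k)
    (hM : ∀ (A' : Fin (ℓ - 1) → Finset α) (𝒮' : Finset (Finset α)),
      IsSemiIntersecting (ℓ - 1) n k A' 𝒮' → 𝒮'.card ≤ M)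
    (A : Fin ℓ → Finset α) (𝒮 : Finset (Finset α))
    (h : IsSemiIntersecting ℓ n k A 𝒮) :
    k * 𝒮.card ≤ n * M := by
  obtain ⟨m, rfl⟩ : ∃ m, ℓ = m + 1 := ⟨ℓ - 1, by omega⟩
  rw [Nat.add_sub_cancel] at hM
  have ⟨_, hcard, _, hint, _⟩ := h
  calc k * #𝒮 = ∑ S ∈ 𝒮, #(A 0 ∩ S) := by
        rw [mul_comm, ← smul_eq_mul, ← sum_const]
        exact sum_congr rfl fun S hS => by rw [inter_comm, hint S hS 0]
    _ ≤ #(A 0) * M := sum_card_inter_le fun v hv =>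
        h.card_link hk hv ▸ hM _ _ (h.link_isSemiIntersecting hv)
    _ = n * M := by rw [hcard 0]

/-- If every `(ℓ−1)`-semi-intersecting family with parameters `n` and `k` has size at
most `M`, then every `ℓ`-semi-intersecting family `𝒮` with parameters `n` and `k`
satisfies `k·|𝒮| ≤ n·M`. -/
theorem stmt_15 {α : Type*} [DecidableEq α] (ℓ n k M : ℕ)
    (hℓ : 2 ≤ ℓ) (hn : 1 ≤ n) (hk : 1 ≤ k)
    (hM : ∀ (A' : Fin (ℓ - 1) → Finset α) (𝒮' : Finset (Finset α)),
      IsSemiIntersecting (ℓ - 1) n k A' 𝒮' → 𝒮'.card ≤ M)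
    (A : Fin ℓ → Finset α) (𝒮 : Finset (Finset α))
    (h : IsSemiIntersecting ℓ n k A 𝒮) :
    k * 𝒮.card ≤ n * M :=
  stmt_15_general ℓ n k M hℓ hk hM A 𝒮 h
end

section
/- Let ℓ ≥ 2 be an even integer, n ≥ 1, k ≥ 1, and let M be an integer such that every (ℓ−1)-semi-intersecting family with parameters n and k has size at most M. Then every nonempty ℓ-semi-intersecting family 𝒮 with parameters n and k satisfies |𝒮| ≤ 1 + k·ℓ·(M − 1). -/
/-- For even `ℓ ≥ 2`: if every `(ℓ−1)`-semi-intersecting family with parameters `n`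
and `k` has size at most `M`, then every nonempty `ℓ`-semi-intersecting family `𝒮`
with parameters `n` and `k` satisfies `|𝒮| ≤ 1 + k·ℓ·(M − 1)`. -/
theorem stmt_17 {α : Type*} [DecidableEq α] (ℓ n k M : ℕ)
    (hℓ : 2 ≤ ℓ) (heven : Even ℓ) (hn : 1 ≤ n) (hk : 1 ≤ k)
    (hM : ∀ (A' : Fin (ℓ - 1) → Finset α) (𝒮' : Finset (Finset α)),
      IsSemiIntersecting (ℓ - 1) n k A' 𝒮' → 𝒮'.card ≤ M)
    (A : Fin ℓ → Finset α) (𝒮 : Finset (Finset α))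
    (hne : 𝒮.Nonempty)
    (h : IsSemiIntersecting ℓ n k A 𝒮) :
    𝒮.card ≤ 1 + k * ℓ * (M - 1) := by
  obtain ⟨hdisj, hcardA, hsub, hcardk, hodd⟩ := h
  obtain ⟨S₀, hS₀⟩ := hne
  have hm : ℓ - 1 + 1 = ℓ := by omega
  -- key claim: for every vertex v, the sets in 𝒮 containing v number at most M
  have key : ∀ i : Fin ℓ, ∀ v ∈ A i, (𝒮.filter (fun T => v ∈ T)).card ≤ M := by
    intro i v hv
    set F : Finset (Finset α) := 𝒮.filter (fun T => v ∈ T) with hF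
    -- injectivity of T ↦ T \ A i on F
    have hinj : ∀ T ∈ F, ∀ T' ∈ F, T \ A i = T' \ A i → T = T' := by
      intro T hT T' hT' hEq
      by_contra hne'
      simp only [hF, Finset.mem_filter] at hT hT'
      have hoddc := hodd T hT.1 T' hT'.1 hne'
      have : (Finset.univ.filter (fun j => T ∩ T' ∩ A j = ∅)).card = 0 := by
        rw [Finset.card_eq_zero, Finset.filter_eq_empty_iff]
        intro j _
        by_cases hji : j = i
        · subst hji
          intro hemp
          have : v ∈ T ∩ T' ∩ A j := by
            simp [Finset.mem_inter, hT.2, hT'.2, hv]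
          simp [hemp] at this
        · have hTA : T ∩ A j = T' ∩ A j := by
            have h1 : T ∩ A j = (T \ A i) ∩ A j := by
              ext x
              simp only [Finset.mem_inter, Finset.mem_sdiff]
              constructor
              · rintro ⟨hx1, hx2⟩
                exact ⟨⟨hx1, fun hxi => Finset.disjoint_left.mp (hdisj j i hji) hx2 hxi⟩, hx2⟩
              · rintro ⟨⟨hx1, _⟩, hx2⟩; exact ⟨hx1, hx2⟩
            have h2 : T' ∩ A j = (T' \ A i) ∩ A j := by
              ext x
              simp only [Finset.mem_inter, Finset.mem_sdiff]
              constructor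
              · rintro ⟨hx1, hx2⟩
                exact ⟨⟨hx1, fun hxi => Finset.disjoint_left.mp (hdisj j i hji) hx2 hxi⟩, hx2⟩
              · rintro ⟨⟨hx1, _⟩, hx2⟩; exact ⟨hx1, hx2⟩
            rw [h1, h2, hEq]
          intro hemp
          have hcard : (T ∩ A j).card = k := hcardk T hT.1 j
          have : T ∩ A j ⊆ T ∩ T' ∩ A j := by
            intro x hx
            have hx' : x ∈ T' ∩ A j := hTA ▸ hx
            simp only [Finset.mem_inter] at hx hx' ⊢
            exact ⟨⟨hx.1, hx'.1⟩, hx.2⟩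
          rw [hemp, Finset.subset_empty] at this
          rw [this] at hcard
          simp at hcard
          omega
      rw [this] at hoddc
      simp [Nat.odd_iff] at hoddc
    -- the embedding of Fin (ℓ-1) into Fin ℓ avoiding i
    set i' : Fin (ℓ - 1 + 1) := Fin.cast hm.symm i with hi'
    set e : Fin (ℓ - 1) → Fin ℓ := fun j => Fin.cast hm (i'.succAbove j) with he
    have he_inj : Function.Injective e := fun a b hab => by
      apply Fin.succAbove_right_injective (p := i')
      exact Fin.cast_injective hm (by exact hab)
    have he_ne : ∀ j, e j ≠ i := by
      intro j hj
      apply Fin.succAbove_ne i' j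
      have : i'.succAbove j = Fin.cast hm.symm i := by
        rw [← hj]; rfl
      rw [this, hi']
    have he_surj : ∀ j : Fin ℓ, j ≠ i → ∃ j', e j' = j := by
      intro j hj
      obtain ⟨j', hj'⟩ := Fin.exists_succAbove_eq
        (show Fin.cast hm.symm j ≠ i' by
          intro hc; apply hj
          have := congrArg (Fin.cast hm) hc
          simpa [hi'] using this)
      exact ⟨j', by simp [he, hj']⟩
    -- A (e j) is disjoint from A i
    have hAe : ∀ (T : Finset α) j, (T \ A i) ∩ A (e j) = T ∩ A (e j) := by
      intro T j
      ext x
      simp only [Finset.mem_inter, Finset.mem_sdiff]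
      constructor
      · rintro ⟨⟨h1, _⟩, h2⟩; exact ⟨h1, h2⟩
      · rintro ⟨h1, h2⟩
        exact ⟨⟨h1, fun hxi => Finset.disjoint_left.mp (hdisj (e j) i (he_ne j)) h2 hxi⟩, h2⟩
    set 𝒮' : Finset (Finset α) := F.image (fun T => T \ A i) with h𝒮'
    have hcard' : 𝒮'.card = F.card := Finset.card_image_of_injOn hinj
    rw [← hcard']
    apply hM (fun j => A (e j)) 𝒮'
    refine ⟨?_, ?_, ?_, ?_, ?_⟩
    · intro a b hab
      exact hdisj (e a) (e b) (fun hc => hab (he_inj hc))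
    · intro j; exact hcardA (e j)
    · intro S hS
      simp only [h𝒮', Finset.mem_image] at hS
      obtain ⟨T, hT, rfl⟩ := hS
      simp only [hF, Finset.mem_filter] at hT
      intro x hx
      simp only [Finset.mem_sdiff] at hx
      have := hsub T hT.1 hx.1
      simp only [Finset.mem_biUnion, Finset.mem_univ, true_and] at this ⊢
      obtain ⟨j, hj⟩ := this
      have hji : j ≠ i := fun hc => hx.2 (hc ▸ hj)
      obtain ⟨j', hj'⟩ := he_surj j hji
      exact ⟨j', hj' ▸ hj⟩
    · intro S hS j
      simp only [h𝒮', Finset.mem_image] at hS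
      obtain ⟨T, hT, rfl⟩ := hS
      simp only [hF, Finset.mem_filter] at hT
      rw [hAe]
      exact hcardk T hT.1 (e j)
    · intro S hS T hT hST
      simp only [h𝒮', Finset.mem_image] at hS hT
      obtain ⟨S₁, hS₁, rfl⟩ := hS
      obtain ⟨T₁, hT₁, rfl⟩ := hT
      have hne₁ : S₁ ≠ T₁ := fun hc => hST (hc ▸ rfl)
      simp only [hF, Finset.mem_filter] at hS₁ hT₁
      have hoddc := hodd S₁ hS₁.1 T₁ hT₁.1 hne₁
      have hinter : ∀ j : Fin (ℓ - 1),
          (S₁ \ A i) ∩ (T₁ \ A i) ∩ A (e j) = S₁ ∩ T₁ ∩ A (e j) := by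
        intro j
        ext x
        simp only [Finset.mem_inter, Finset.mem_sdiff]
        constructor
        · rintro ⟨⟨⟨h1, _⟩, ⟨h2, _⟩⟩, h3⟩; exact ⟨⟨h1, h2⟩, h3⟩
        · rintro ⟨⟨h1, h2⟩, h3⟩
          have hni : x ∉ A i := fun hxi =>
            Finset.disjoint_left.mp (hdisj (e j) i (he_ne j)) h3 hxi
          exact ⟨⟨⟨h1, hni⟩, ⟨h2, hni⟩⟩, h3⟩
      have himg : Finset.univ.filter (fun j => S₁ ∩ T₁ ∩ A j = ∅) =
          (Finset.univ.filter (fun j : Fin (ℓ - 1) =>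
            (S₁ \ A i) ∩ (T₁ \ A i) ∩ A (e j) = ∅)).image e := by
        ext j
        simp only [Finset.mem_filter, Finset.mem_univ, true_and, Finset.mem_image]
        constructor
        · intro hj
          have hji : j ≠ i := by
            intro hc; subst hc
            have : v ∈ S₁ ∩ T₁ ∩ A j := by
              simp [Finset.mem_inter, hS₁.2, hT₁.2, hv]
            simp [hj] at this
          obtain ⟨j', hj'⟩ := he_surj j hji
          exact ⟨j', ⟨by rw [hinter, hj'] ; exact hj, hj'⟩⟩
        · rintro ⟨j', ⟨hj', rfl⟩⟩
          rw [hinter] at hj'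
          exact hj'
      have : (Finset.univ.filter (fun j : Fin (ℓ - 1) =>
            (S₁ \ A i) ∩ (T₁ \ A i) ∩ A (e j) = ∅)).card =
          (Finset.univ.filter (fun j => S₁ ∩ T₁ ∩ A j = ∅)).card := by
        rw [himg, Finset.card_image_of_injective _ he_inj]
      rw [this]
      exact hoddc
  -- every T ≠ S₀ in 𝒮 meets S₀
  have hmeet : ∀ T ∈ 𝒮, T ≠ S₀ → ∃ v ∈ S₀, v ∈ T := by
    intro T hT hTne
    have hoddc := hodd S₀ hS₀ T hT (Ne.symm hTne)
    by_contra hc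
    push_neg at hc
    have : Finset.univ.filter (fun i => S₀ ∩ T ∩ A i = ∅) = Finset.univ := by
      rw [Finset.filter_eq_self]
      intro i _
      rw [Finset.eq_empty_iff_forall_notMem]
      intro x hx
      simp only [Finset.mem_inter] at hx
      exact hc x hx.1.1 hx.1.2
    rw [this, Finset.card_univ, Fintype.card_fin] at hoddc
    exact (Nat.not_odd_iff_even.mpr heven) hoddc
  -- |S₀| = k * ℓ
  have hS₀card : S₀.card = k * ℓ := by
    have hS₀eq : S₀ = Finset.univ.biUnion (fun i => S₀ ∩ A i) := by
      ext x
      simp only [Finset.mem_biUnion, Finset.mem_univ, true_and, Finset.mem_inter]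
      constructor
      · intro hx
        have := hsub S₀ hS₀ hx
        simp only [Finset.mem_biUnion, Finset.mem_univ, true_and] at this
        obtain ⟨i, hi⟩ := this
        exact ⟨i, hx, hi⟩
      · rintro ⟨i, hx, _⟩; exact hx
    rw [hS₀eq, Finset.card_biUnion]
    · simp only [hcardk S₀ hS₀]
      simp [Finset.sum_const, Finset.card_univ]
      ring
    · intro a _ b _ hab
      exact Finset.disjoint_of_subset_left Finset.inter_subset_right
        (Finset.disjoint_of_subset_right Finset.inter_subset_right (hdisj a b hab))
  -- vertex-level bound on 𝒮 minus S₀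
  have hvert : ∀ v ∈ S₀, ((𝒮.erase S₀).filter (fun T => v ∈ T)).card ≤ M - 1 := by
    intro v hv
    have hvA : ∃ i, v ∈ A i := by
      have := hsub S₀ hS₀ hv
      simp only [Finset.mem_biUnion, Finset.mem_univ, true_and] at this
      exact this
    obtain ⟨i, hvi⟩ := hvA
    have hkey := key i v hvi
    have herase : (𝒮.erase S₀).filter (fun T => v ∈ T) =
        (𝒮.filter (fun T => v ∈ T)).erase S₀ := by
      ext T
      simp only [Finset.mem_filter, Finset.mem_erase]
      tauto
    rw [herase]
    have hS₀mem : S₀ ∈ 𝒮.filter (fun T => v ∈ T) := Finset.mem_filter.mpr ⟨hS₀, hv⟩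
    rw [Finset.card_erase_of_mem hS₀mem]
    omega
  -- put it together
  have hsub' : 𝒮.erase S₀ ⊆ S₀.biUnion (fun v => (𝒮.erase S₀).filter (fun T => v ∈ T)) := by
    intro T hT
    simp only [Finset.mem_erase] at hT
    obtain ⟨v, hv, hvT⟩ := hmeet T hT.2 hT.1
    simp only [Finset.mem_biUnion, Finset.mem_filter, Finset.mem_erase]
    exact ⟨v, hv, ⟨hT.1, hT.2⟩, hvT⟩
  have hbound : (𝒮.erase S₀).card ≤ k * ℓ * (M - 1) := by
    calc (𝒮.erase S₀).card
        ≤ (S₀.biUnion (fun v => (𝒮.erase S₀).filter (fun T => v ∈ T))).card :=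
          Finset.card_le_card hsub'
      _ ≤ ∑ v ∈ S₀, ((𝒮.erase S₀).filter (fun T => v ∈ T)).card :=
          Finset.card_biUnion_le
      _ ≤ ∑ _v ∈ S₀, (M - 1) := Finset.sum_le_sum hvert
      _ = k * ℓ * (M - 1) := by rw [Finset.sum_const, hS₀card, smul_eq_mul]
  have := Finset.card_erase_of_mem hS₀
  omega
end

section
/- Let ℓ ≥ 2 be an even integer and suppose there exists a finite projective plane of order ℓ − 1 (an ℓ-uniform, ℓ-regular family ℒ of ℓ² − ℓ + 1 lines on ℓ² − ℓ + 1 points in which any two distinct lines meet in exactly one point and any two distinct points lie on exactly one common line). Then there exists an ℓ-semi-intersecting family with parameters n = ℓ − 1 and k = 1 of size (ℓ − 1)². -/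
open Finset Function

namespace Finset

variable {α : Type*} [DecidableEq α]

theorem singleton_inter_eq_empty_iff {x : α} {s : Finset α} : {x} ∩ s = ∅ ↔ x ∉ s :=
  disjoint_iff_inter_eq_empty.symm.trans disjoint_singleton_left

theorem disjoint_erase_of_card_inter_eq_one {L M : Finset α} {p : α} (hpL : p ∈ L)
    (hpM : p ∈ M) (h : #(L ∩ M) = 1) : Disjoint (L.erase p) (M.erase p) := by
  obtain ⟨a, ha⟩ := card_eq_one.mp h
  have hpa : p = a := mem_singleton.mp (ha ▸ mem_inter.mpr ⟨hpL, hpM⟩)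
  rw [disjoint_iff_inter_eq_empty, erase_inter, inter_erase, erase_idem, ha, ← hpa,
    erase_singleton]

theorem filter_notMem_eq_erase {ι : Type*} [Fintype ι] [DecidableEq ι] {A : ι → Finset α}
    (hA : Pairwise (Disjoint on A)) {x : α} {i₀ : ι} (hx : x ∈ A i₀) :
    univ.filter (fun i => x ∉ A i) = univ.erase i₀ := by
  ext i
  simp only [mem_filter, mem_univ, true_and, mem_erase, and_true]
  constructor
  · rintro hxi rfl
    exact hxi hx
  · exact fun hi hxi => disjoint_left.mp (hA hi) hxi hx

end Finset

section Derivation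

variable {α : Type*} [DecidableEq α] {P : Finset α} {ℒ : Finset (Finset α)} {p : α}
  {m : ℕ} {L : Fin m → Finset α}

theorem pairwise_disjoint_erase_of_pencil (hmeet : ∀ M ∈ ℒ, ∀ M' ∈ ℒ, M ≠ M' → #(M ∩ M') = 1)
    (hL : ∀ i, L i ∈ ℒ ∧ p ∈ L i) (hLinj : Injective L) :
    Pairwise (Disjoint on fun i => (L i).erase p) := fun i j hij =>
  disjoint_erase_of_card_inter_eq_one (hL i).2 (hL j).2
    (hmeet _ (hL i).1 _ (hL j).1 (hLinj.ne hij))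

theorem exists_mem_erase_of_pencil
    (hjoin : ∀ x ∈ P, ∀ y ∈ P, x ≠ y → #(ℒ.filter (fun M => x ∈ M ∧ y ∈ M)) = 1)
    (hp : p ∈ P) (hcover : ∀ M ∈ ℒ, p ∈ M → ∃ i, L i = M)
    {x : α} (hx : x ∈ P) (hxp : x ≠ p) : ∃ i, x ∈ (L i).erase p := by
  obtain ⟨M, hM⟩ := card_pos.mp (hjoin x hx p hp hxp ▸ Nat.one_pos)
  obtain ⟨hMℒ, hxM, hpM⟩ := mem_filter.mp hM
  obtain ⟨i, rfl⟩ := hcover M hMℒ hpM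
  exact ⟨i, mem_erase.mpr ⟨hxp, hxM⟩⟩

theorem isSemiIntersecting_of_pencil (hodd : Odd (m - 1)) (hsub : ∀ M ∈ ℒ, M ⊆ P)
    (hunif : ∀ M ∈ ℒ, #M = m) (hmeet : ∀ M ∈ ℒ, ∀ M' ∈ ℒ, M ≠ M' → #(M ∩ M') = 1)
    (hjoin : ∀ x ∈ P, ∀ y ∈ P, x ≠ y → #(ℒ.filter (fun M => x ∈ M ∧ y ∈ M)) = 1)
    (hp : p ∈ P) (hL : ∀ i, L i ∈ ℒ ∧ p ∈ L i) (hLinj : Injective L)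
    (hcover : ∀ M ∈ ℒ, p ∈ M → ∃ i, L i = M) :
    IsSemiIntersecting m (m - 1) 1 (fun i => (L i).erase p) (ℒ.filter (fun S => p ∉ S)) := by
  have hdisj := pairwise_disjoint_erase_of_pencil hmeet hL hLinj
  have hcovered {x : α} (hx : x ∈ P) (hxp : x ≠ p) :=
    exists_mem_erase_of_pencil hjoin hp hcover hx hxp
  refine ⟨fun i j => @hdisj i j, fun i => ?_, fun S hS => ?_, fun S hS i => ?_,
    fun S hS T hT hST => ?_⟩
  · rw [card_erase_of_mem (hL i).2, hunif _ (hL i).1]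
  · obtain ⟨hSℒ, hpS⟩ := mem_filter.mp hS
    intro x hxS
    obtain ⟨i, hi⟩ := hcovered (hsub S hSℒ hxS) (ne_of_mem_of_not_mem hxS hpS)
    exact mem_biUnion.mpr ⟨i, mem_univ i, hi⟩
  · obtain ⟨hSℒ, hpS⟩ := mem_filter.mp hS
    rw [inter_erase, erase_eq_of_notMem (fun h => hpS (mem_inter.mp h).1)]
    exact hmeet S hSℒ _ (hL i).1 fun h => hpS (h ▸ (hL i).2)
  · obtain ⟨hSℒ, hpS⟩ := mem_filter.mp hS
    obtain ⟨hTℒ, -⟩ := mem_filter.mp hT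
    obtain ⟨x, hx⟩ := card_eq_one.mp (hmeet S hSℒ T hTℒ hST)
    have hxS : x ∈ S := (mem_inter.mp (hx ▸ mem_singleton_self x)).1
    obtain ⟨i₀, hi₀⟩ := hcovered (hsub S hSℒ hxS) (ne_of_mem_of_not_mem hxS hpS)
    simp_rw [hx, singleton_inter_eq_empty_iff]
    rw [filter_notMem_eq_erase hdisj hi₀, card_erase_of_mem (mem_univ i₀), card_univ,
      Fintype.card_fin]
    exact hodd

end Derivation

theorem Nat.sub_one_sq_add_self {n : ℕ} (hn : 1 ≤ n) : (n - 1) ^ 2 + n = n ^ 2 - n + 1 := by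
  obtain ⟨q, rfl⟩ : ∃ q, n = q + 1 := ⟨n - 1, by omega⟩
  simp only [Nat.add_sub_cancel]
  ring_nf
  omega

/-- If `ℓ ≥ 2` is even and there exists a finite projective plane of order `ℓ − 1`
(an `ℓ`-uniform, `ℓ`-regular family of `ℓ² − ℓ + 1` lines on `ℓ² − ℓ + 1` points,
any two distinct lines meeting in exactly one point, any two distinct points on exactly
one common line), then there exists an `ℓ`-semi-intersecting family with parameters
`n = ℓ − 1` and `k = 1` of size `(ℓ − 1)²`. -/
theorem stmt_18 (ℓ : ℕ) (hℓ : 2 ≤ ℓ) (heven : Even ℓ)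
    (P : Finset ℕ) (ℒ : Finset (Finset ℕ))
    (hP : P.card = ℓ ^ 2 - ℓ + 1)
    (hLcard : ℒ.card = ℓ ^ 2 - ℓ + 1)
    (hsub : ∀ L ∈ ℒ, L ⊆ P)
    (hunif : ∀ L ∈ ℒ, L.card = ℓ)
    (hreg : ∀ p ∈ P, (ℒ.filter (fun L => p ∈ L)).card = ℓ)
    (hmeet : ∀ L ∈ ℒ, ∀ L' ∈ ℒ, L ≠ L' → (L ∩ L').card = 1)
    (hjoin : ∀ p ∈ P, ∀ q ∈ P, p ≠ q →
      (ℒ.filter (fun L => p ∈ L ∧ q ∈ L)).card = 1) :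
    ∃ (A : Fin ℓ → Finset ℕ) (𝒮 : Finset (Finset ℕ)),
      IsSemiIntersecting ℓ (ℓ - 1) 1 A 𝒮 ∧ 𝒮.card = (ℓ - 1) ^ 2 := by
  obtain ⟨p, hp⟩ := card_pos.mp (show 0 < #P by omega)
  let e := (equivFinOfCardEq (hreg p hp)).symm
  have hL (i : Fin ℓ) : (e i : Finset ℕ) ∈ ℒ ∧ p ∈ (e i : Finset ℕ) := mem_filter.mp (e i).2
  have hcover (M : Finset ℕ) (hM : M ∈ ℒ) (hpM : p ∈ M) : ∃ i, (e i : Finset ℕ) = M :=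
    ⟨e.symm ⟨M, mem_filter.mpr ⟨hM, hpM⟩⟩, by simp⟩
  refine ⟨_, _, isSemiIntersecting_of_pencil (Nat.Even.sub_odd (by omega) heven odd_one) hsub
    hunif hmeet hjoin hp hL (Subtype.val_injective.comp e.injective) hcover, ?_⟩
  have hsplit := card_filter_add_card_filter_not (s := ℒ) (fun M => p ∈ M)
  have := Nat.sub_one_sq_add_self (n := ℓ) (by omega)
  rw [hreg p hp] at hsplit
  omega
end
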